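/- For odd n ≥ 3, the 2×n grid graph L_{2,n} satisfies DL(L_{2,n}) = (n+1)/2, achieved by labelling the first row 2,4,...,2n and the second row n+2, n+4, ..., 2n−1, 1, 3, ..., n. -/

import Mathlib

/-!
In the labelling, label `2t + 2` sits at column `t` of the top row and label `2t + 1` at column
`t + (n - 1) / 2 (mod n)` of the bottom row. Hence consecutive labels lie in different rows, in
columns at least `(n - 1) / 2` apart (this uses that `n` is odd), so they are at distance at
least `(n + 1) / 2`. Conversely, the middle vertex of a row is within `(n + 1) / 2` of every
vertex, and in any labelling it has a successor or a predecessor.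
-/

/-- `G` admits a `k`-dispersed labelling. -/
def HasDispersedLabelling {V : Type*} [Fintype V] (G : SimpleGraph V) (k : ℕ) : Prop :=
  ∃ φ : Fin (Fintype.card V) ≃ V,
    ∀ i j : Fin (Fintype.card V), (j : ℕ) = (i : ℕ) + 1 → k ≤ G.dist (φ i) (φ j)

/-- `DL G`: the maximum `k` such that `G` admits a `k`-dispersed labelling. -/
noncomputable def DL {V : Type*} [Fintype V] (G : SimpleGraph V) : ℕ :=
  sSup {k | HasDispersedLabelling G k}

/-- The `m × n` grid graph, as the box product of two path graphs. -/
def gridGraph (m n : ℕ) : SimpleGraph (Fin m × Fin n) :=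
  SimpleGraph.boxProd (SimpleGraph.pathGraph m) (SimpleGraph.pathGraph n)

namespace SimpleGraph

theorem dist_boxProd {α β : Type*} {G : SimpleGraph α} {H : SimpleGraph β}
    (hG : G.Preconnected) (hH : H.Preconnected) (x y : α × β) :
    (G □ H).dist x y = G.dist x.1 y.1 + H.dist x.2 y.2 := by
  have h := edist_boxProd (G := G) (H := H) x y
  rw [← ((hG x.1 y.1).coe_dist_eq_edist), ← ((hH x.2 y.2).coe_dist_eq_edist),
    ← ((hG.boxProd hH) x y).coe_dist_eq_edist] at h
  exact_mod_cast h

theorem Walk.natDist_le_length {n : ℕ} {i j : Fin n} (w : (pathGraph n).Walk i j) :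
    Nat.dist i j ≤ w.length := by
  induction w with
  | nil => simp
  | cons hadj _ ih =>
    rw [pathGraph_adj] at hadj
    simp only [Walk.length_cons, Nat.dist] at ih ⊢
    omega

theorem pathGraph_dist_le {n : ℕ} (i j : Fin n) : (pathGraph n).dist i j ≤ Nat.dist i j := by
  wlog hij : i ≤ j generalizing i j
  · rw [dist_comm, Nat.dist_comm]; exact this j i (le_of_not_ge hij)
  obtain ⟨d, hd⟩ := Nat.exists_eq_add_of_le (Fin.le_iff_val_le_val.mp hij)
  induction d generalizing j with
  | zero => simp [Fin.ext (hd.trans (add_zero _))]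
  | succ d ih =>
    have hj : (j : ℕ) - 1 < n := by omega
    set j' : Fin n := ⟨j - 1, hj⟩
    have hadj : (pathGraph n).Adj j' j := pathGraph_adj.mpr (.inl (by simp only [j']; omega))
    have hj' : (pathGraph n).dist i j' ≤ Nat.dist i j' :=
      ih j' (Fin.le_iff_val_le_val.mpr (by simp only [j']; omega)) (by simp only [j']; omega)
    calc (pathGraph n).dist i j ≤ (pathGraph n).dist i j' + (pathGraph n).dist j' j :=
          (pathGraph_preconnected n i j').dist_triangle_left j
      _ ≤ Nat.dist i (j - 1) + 1 := by
          rw [dist_eq_one_iff_adj.mpr hadj]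
          exact Nat.add_le_add_right hj' 1
      _ = Nat.dist i j := by simp only [Nat.dist]; omega

theorem pathGraph_dist {n : ℕ} (i j : Fin n) : (pathGraph n).dist i j = Nat.dist i j := by
  refine le_antisymm (pathGraph_dist_le i j) ?_
  obtain ⟨w, hw⟩ := (pathGraph_preconnected n i j).exists_walk_length_eq_dist
  exact hw ▸ w.natDist_le_length

end SimpleGraph

open SimpleGraph

theorem gridGraph_dist {m n : ℕ} (u v : Fin m × Fin n) :
    (gridGraph m n).dist u v = Nat.dist u.1 v.1 + Nat.dist u.2 v.2 := by
  rw [gridGraph, dist_boxProd (pathGraph_preconnected m) (pathGraph_preconnected n),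
    pathGraph_dist, pathGraph_dist]

theorem gridGraph_dist_center_le {m n : ℕ} (hm : 0 < m) (hn : 0 < n) (v : Fin m × Fin n) :
    (gridGraph m n).dist (⟨m / 2, by omega⟩, ⟨n / 2, by omega⟩) v ≤ m / 2 + n / 2 := by
  have := v.1.isLt
  have := v.2.isLt
  rw [gridGraph_dist]
  simp only [Nat.dist]
  omega

theorem HasDispersedLabelling.le_of_forall_dist_le {V : Type*} [Fintype V] {G : SimpleGraph V}
    {k r : ℕ} (h : HasDispersedLabelling G k) (hV : 1 < Fintype.card V) (c : V)
    (hc : ∀ v, G.dist c v ≤ r) : k ≤ r := by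
  obtain ⟨φ, hφ⟩ := h
  obtain ⟨i, rfl⟩ := φ.surjective c
  by_cases hlast : (i : ℕ) + 1 < Fintype.card V
  · exact (hφ i ⟨i + 1, hlast⟩ rfl).trans (hc _)
  · have hprev := hφ ⟨i - 1, by omega⟩ i (by simp only; omega)
    rw [dist_comm] at hprev
    exact hprev.trans (hc _)

theorem hasDispersedLabelling_of_injective {V : Type*} [Fintype V] {G : SimpleGraph V} {k : ℕ}
    (f : V → ℕ) (hf : Function.Injective f)
    (hrange : ∀ v, 1 ≤ f v ∧ f v ≤ Fintype.card V)
    (hk : ∀ u v, f v = f u + 1 → k ≤ G.dist u v) : HasDispersedLabelling G k := by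
  let g : V → Fin (Fintype.card V) := fun v => ⟨f v - 1, by have := hrange v; omega⟩
  have hg : Function.Injective g := fun u v huv => hf <| by
    have := hrange u; have := hrange v
    have := congrArg Fin.val huv
    simp only [g] at this
    omega
  let e := Equiv.ofBijective g ((Fintype.bijective_iff_injective_and_card g).mpr ⟨hg, by simp⟩)
  refine ⟨e.symm, fun i j hij => ?_⟩
  obtain ⟨u, rfl⟩ := e.surjective i
  obtain ⟨v, rfl⟩ := e.surjective j
  rw [e.symm_apply_apply, e.symm_apply_apply]
  simp only [e, Equiv.ofBijective_apply, g] at hij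
  have := hrange u; have := hrange v
  exact hk u v (by omega)

def twoRowLabel (n : ℕ) (p : Fin 2 × Fin n) : ℕ :=
  if p.1 = (0 : Fin 2) then 2 * ((p.2 : ℕ) + 1)
  else if (p.2 : ℕ) < (n - 1) / 2 then n + 2 + 2 * (p.2 : ℕ)
  else 2 * ((p.2 : ℕ) - (n - 1) / 2) + 1

theorem twoRowLabel_injective {n : ℕ} (hodd : Odd n) : Function.Injective (twoRowLabel n) := by
  obtain ⟨m, rfl⟩ := hodd
  rintro ⟨a, i⟩ ⟨b, j⟩ h
  have := i.isLt; have := j.isLt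
  fin_cases a <;> fin_cases b <;> simp [twoRowLabel, Fin.ext_iff] at h ⊢ <;>
    (try split_ifs at h) <;> omega

theorem twoRowLabel_mem_Icc {n : ℕ} (p : Fin 2 × Fin n) :
    1 ≤ twoRowLabel n p ∧ twoRowLabel n p ≤ 2 * n := by
  have := p.2.isLt
  unfold twoRowLabel
  split_ifs <;> omega

theorem twoRowLabel_dist_of_succ {n : ℕ} (hodd : Odd n) {u v : Fin 2 × Fin n}
    (h : twoRowLabel n v = twoRowLabel n u + 1) : (n + 1) / 2 ≤ (gridGraph 2 n).dist u v := by
  obtain ⟨m, rfl⟩ := hodd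
  obtain ⟨a, i⟩ := u
  obtain ⟨b, j⟩ := v
  have := i.isLt; have := j.isLt
  rw [gridGraph_dist]
  fin_cases a <;> fin_cases b <;> simp [twoRowLabel, Nat.dist] at h ⊢ <;>
    (try split_ifs at h) <;> omega

theorem DL_grid_two_rows_odd_general (n : ℕ) (hodd : Odd n) :
    (Function.Injective (fun p : Fin 2 × Fin n =>
        if p.1 = (0 : Fin 2) then 2 * ((p.2 : ℕ) + 1)
        else if (p.2 : ℕ) < (n - 1) / 2 then n + 2 + 2 * (p.2 : ℕ)
        else 2 * ((p.2 : ℕ) - (n - 1) / 2) + 1)) ∧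
    (∀ p : Fin 2 × Fin n,
        1 ≤ (if p.1 = (0 : Fin 2) then 2 * ((p.2 : ℕ) + 1)
          else if (p.2 : ℕ) < (n - 1) / 2 then n + 2 + 2 * (p.2 : ℕ)
          else 2 * ((p.2 : ℕ) - (n - 1) / 2) + 1) ∧
        (if p.1 = (0 : Fin 2) then 2 * ((p.2 : ℕ) + 1)
          else if (p.2 : ℕ) < (n - 1) / 2 then n + 2 + 2 * (p.2 : ℕ)
          else 2 * ((p.2 : ℕ) - (n - 1) / 2) + 1) ≤ 2 * n) ∧
    (∀ u v : Fin 2 × Fin n,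
        (if v.1 = (0 : Fin 2) then 2 * ((v.2 : ℕ) + 1)
          else if (v.2 : ℕ) < (n - 1) / 2 then n + 2 + 2 * (v.2 : ℕ)
          else 2 * ((v.2 : ℕ) - (n - 1) / 2) + 1) =
        (if u.1 = (0 : Fin 2) then 2 * ((u.2 : ℕ) + 1)
          else if (u.2 : ℕ) < (n - 1) / 2 then n + 2 + 2 * (u.2 : ℕ)
          else 2 * ((u.2 : ℕ) - (n - 1) / 2) + 1) + 1 →
        (n + 1) / 2 ≤ (gridGraph 2 n).dist u v) ∧
    DL (gridGraph 2 n) = (n + 1) / 2 := by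
  have hcard : Fintype.card (Fin 2 × Fin n) = 2 * n := by simp
  have hfar : ∀ u v, twoRowLabel n v = twoRowLabel n u + 1 →
      (n + 1) / 2 ≤ (gridGraph 2 n).dist u v := fun _ _ => twoRowLabel_dist_of_succ hodd
  have hlabelling : HasDispersedLabelling (gridGraph 2 n) ((n + 1) / 2) :=
    hasDispersedLabelling_of_injective _ (twoRowLabel_injective hodd)
      (hcard ▸ twoRowLabel_mem_Icc) hfar
  have hmax (k : ℕ) (hk : HasDispersedLabelling (gridGraph 2 n) k) : k ≤ (n + 1) / 2 := by
    obtain ⟨m, rfl⟩ := hodd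
    have := hk.le_of_forall_dist_le (by omega) _ (gridGraph_dist_center_le two_pos (by omega))
    omega
  exact ⟨twoRowLabel_injective hodd, twoRowLabel_mem_Icc, hfar,
    IsGreatest.csSup_eq ⟨hlabelling, hmax⟩⟩

theorem DL_grid_two_rows_odd (n : ℕ) (hn : 3 ≤ n) (hodd : Odd n) :
    (Function.Injective (fun p : Fin 2 × Fin n =>
        if p.1 = (0 : Fin 2) then 2 * ((p.2 : ℕ) + 1)
        else if (p.2 : ℕ) < (n - 1) / 2 then n + 2 + 2 * (p.2 : ℕ)
        else 2 * ((p.2 : ℕ) - (n - 1) / 2) + 1)) ∧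
    (∀ p : Fin 2 × Fin n,
        1 ≤ (if p.1 = (0 : Fin 2) then 2 * ((p.2 : ℕ) + 1)
          else if (p.2 : ℕ) < (n - 1) / 2 then n + 2 + 2 * (p.2 : ℕ)
          else 2 * ((p.2 : ℕ) - (n - 1) / 2) + 1) ∧
        (if p.1 = (0 : Fin 2) then 2 * ((p.2 : ℕ) + 1)
          else if (p.2 : ℕ) < (n - 1) / 2 then n + 2 + 2 * (p.2 : ℕ)
          else 2 * ((p.2 : ℕ) - (n - 1) / 2) + 1) ≤ 2 * n) ∧
    (∀ u v : Fin 2 × Fin n,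
        (if v.1 = (0 : Fin 2) then 2 * ((v.2 : ℕ) + 1)
          else if (v.2 : ℕ) < (n - 1) / 2 then n + 2 + 2 * (v.2 : ℕ)
          else 2 * ((v.2 : ℕ) - (n - 1) / 2) + 1) =
        (if u.1 = (0 : Fin 2) then 2 * ((u.2 : ℕ) + 1)
          else if (u.2 : ℕ) < (n - 1) / 2 then n + 2 + 2 * (u.2 : ℕ)
          else 2 * ((u.2 : ℕ) - (n - 1) / 2) + 1) + 1 →
        (n + 1) / 2 ≤ (gridGraph 2 n).dist u v) ∧
    DL (gridGraph 2 n) = (n + 1) / 2 :=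
  DL_grid_two_rows_odd_general n hodd
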